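/- Under backward sampling, the sequence (Y_i, Z_i)_{i=1,...,n} is a (generally time-inhomogeneous) Markov chain: the conditional distribution of Y_i given (Y_1,Z_1,...,Y_{i-1},Z_{i-1}) and the constraint C depends only on Z_{i-1}, and equals π_i·B_i(Z_{i-1}+1)/B_{i-1}(Z_{i-1}). -/

import Mathlib

open scoped Classical
open Finset

/-- Product Bernoulli weight of a configuration: individual `i+1` (1-based) has
probability `π (i+1)` of being a case (`true`). -/
noncomputable def wgt (n : ℕ) (π : ℕ → ℝ) (y : Fin n → Bool) : ℝ :=
  ∏ i : Fin n, if y i then π (i.1 + 1) else 1 - π (i.1 + 1)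

/-- Probability of an event under the product Bernoulli law. -/
noncomputable def prb (n : ℕ) (π : ℕ → ℝ) (E : (Fin n → Bool) → Prop) : ℝ :=
  ∑ y : Fin n → Bool, if E y then wgt n π y else 0

/-- Partial sum `Z_j = Y_1 + ... + Y_j`. -/
def zsum (n : ℕ) (y : Fin n → Bool) (j : ℕ) : ℤ :=
  ((Finset.univ.filter (fun i : Fin n => i.1 < j ∧ y i)).card : ℤ)

/-- Tail sum `Y_{i+1} + ... + Y_n`. -/
def tcnt (n : ℕ) (y : Fin n → Bool) (i : ℕ) : ℤ :=
  ((Finset.univ.filter (fun k : Fin n => i ≤ k.1 ∧ y k)).card : ℤ)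

/-- Forward quantity `F_i(m) = P(Z_i = m)`. -/
noncomputable def fwd (n : ℕ) (π : ℕ → ℝ) (i : ℕ) (m : ℤ) : ℝ :=
  prb n π (fun y => zsum n y i = m)

/-- Backward quantity `B_i(m) = P(Y_{i+1} + ... + Y_n = n1 - m)`. -/
noncomputable def bwd (n : ℕ) (π : ℕ → ℝ) (n1 : ℤ) (i : ℕ) (m : ℤ) : ℝ :=
  prb n π (fun y => tcnt n y i = n1 - m)

/-! Under the product Bernoulli law, pinning the coordinates in a set `S` to fixed values multiplies
the probability of any event that depends only on the coordinates outside `S` by the weight of the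
pinned values (`prb_agree_on_and`). Once the history `Y_1, …, Y_{i-1}` is fixed, the constraint
`Z_n = n1` is the tail constraint `Y_i + ⋯ + Y_n = n1 - Z_{i-1}`, so numerator and denominator both
factor as the weight of the history times a backward probability. The history weight cancels, and
what remains depends on the history only through `Z_{i-1}`. -/

def bern (q : ℝ) (b : Bool) : ℝ := if b then q else 1 - q

lemma sum_prod_bern {ι : Type*} [Fintype ι] [DecidableEq ι] (q : ι → ℝ) :
    ∑ u : ι → Bool, ∏ j, bern (q j) (u j) = 1 := by
  rw [← Fintype.prod_sum]
  exact prod_eq_one fun j _ => by simp [bern]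

section Counts

variable {n : ℕ}

lemma zsum_add_tcnt (y : Fin n → Bool) (t : ℕ) : zsum n y t + tcnt n y t = zsum n y n := by
  simp only [zsum, tcnt, Fin.is_lt, true_and]
  rw [← Nat.cast_add, ← card_union_of_disjoint]
  · congr 2
    ext j
    simp only [mem_union, mem_filter, mem_univ, true_and]
    have := lt_or_ge j.1 t
    tauto
  · exact disjoint_filter.2 fun j _ h h' => by omega

lemma zsum_congr {t : ℕ} {y a : Fin n → Bool} (h : ∀ j : Fin n, j.1 < t → y j = a j) :
    zsum n y t = zsum n a t := by
  unfold zsum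
  congr 2
  exact filter_congr fun j _ => and_congr_right fun hj => by rw [h j hj]

lemma tcnt_congr {t : ℕ} {y y' : Fin n → Bool} (h : ∀ j : Fin n, t ≤ j.1 → y j = y' j) :
    tcnt n y t = tcnt n y' t := by
  unfold tcnt
  congr 2
  exact filter_congr fun j _ => and_congr_right fun hj => by rw [h j hj]

lemma tcnt_eq_add_tcnt_succ (y : Fin n → Bool) (t : ℕ) (ht : t < n) :
    tcnt n y t = (if y ⟨t, ht⟩ then 1 else 0) + tcnt n y (t + 1) := by
  have hsplit : univ.filter (fun j : Fin n => t ≤ j.1 ∧ y j) =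
      univ.filter (fun j => j = ⟨t, ht⟩ ∧ y j) ∪
        univ.filter (fun j : Fin n => t + 1 ≤ j.1 ∧ y j) := by
    ext j
    simp only [mem_union, mem_filter, mem_univ, true_and, Fin.ext_iff]
    cases y j
    · simp
    · simp only [and_true]
      omega
  have hhead : #(univ.filter (fun j => j = ⟨t, ht⟩ ∧ y j)) = if y ⟨t, ht⟩ then 1 else 0 := by
    split_ifs with hk
    · refine card_eq_one.2 ⟨⟨t, ht⟩, ?_⟩
      ext j
      simp only [mem_filter, mem_univ, true_and, mem_singleton, and_iff_left_iff_imp]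
      rintro rfl
      exact hk
    · simp_all
  rw [tcnt, tcnt, hsplit, card_union_of_disjoint (disjoint_filter.2 fun j _ h h' => by
    simp [h.1] at h'), hhead]
  split_ifs <;> simp

end Counts

section Factorization

variable {n : ℕ} (π : ℕ → ℝ)

lemma prb_congr {E E' : (Fin n → Bool) → Prop} (h : ∀ y, E y ↔ E' y) :
    prb n π E = prb n π E' := by
  simp only [prb, h]

lemma wgt_piEquivPiSubtypeProd_symm (p : Fin n → Prop) [DecidablePred p]
    (u : {j // p j} → Bool) (v : {j // ¬ p j} → Bool) :
    wgt n π ((Equiv.piEquivPiSubtypeProd p fun _ => Bool).symm (u, v)) =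
      (∏ j : {j // p j}, bern (π (j.1.1 + 1)) (u j)) *
        ∏ j : {j // ¬ p j}, bern (π (j.1.1 + 1)) (v j) := by
  rw [wgt, ← Fintype.prod_subtype_mul_prod_subtype p]
  congr 1 <;> refine prod_congr rfl fun j _ => ?_ <;>
    simp [Equiv.piEquivPiSubtypeProd_symm_apply, bern, j.2]

theorem prb_agree_on_and (p : Fin n → Prop) [DecidablePred p] (a : Fin n → Bool)
    (P : (Fin n → Bool) → Prop) (hP : ∀ y y', (∀ j, ¬ p j → y j = y' j) → P y → P y') :
    prb n π (fun y => (∀ j, p j → y j = a j) ∧ P y) =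
      (∏ j ∈ univ.filter p, bern (π (j.1 + 1)) (a j)) * prb n π P := by
  set e := Equiv.piEquivPiSubtypeProd p fun _ => Bool
  set A : ({j // p j} → Bool) → ℝ := fun u => ∏ j, bern (π (j.1.1 + 1)) (u j)
  set B : ({j // ¬ p j} → Bool) → ℝ := fun v => ∏ j, bern (π (j.1.1 + 1)) (v j)
  have hsplit : ∀ E, prb n π E = ∑ u, ∑ v, if E (e.symm (u, v)) then A u * B v else 0 := by
    intro E
    rw [prb, ← e.symm.sum_comp, Fintype.sum_prod_type]
    simp only [e, wgt_piEquivPiSubtypeProd_symm, A, B]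
  set ap : {j // p j} → Bool := fun j => a j
  have hagree : ∀ u v, (∀ j, p j → e.symm (u, v) j = a j) ↔ u = ap := by
    intro u v
    simp only [e, Equiv.piEquivPiSubtypeProd_symm_apply, funext_iff, Subtype.forall, ap]
    exact forall_congr' fun j => forall_congr' fun hj => by rw [dif_pos hj]
  have hQ : ∀ u v, P (e.symm (u, v)) ↔ P (e.symm (ap, v)) := by
    have htail : ∀ u u' v j, ¬ p j → e.symm (u, v) j = e.symm (u', v) j := by
      simp +contextual [e, Equiv.piEquivPiSubtypeProd_symm_apply]
    exact fun u v => ⟨hP _ _ (htail u ap v), hP _ _ (htail ap u v)⟩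
  have hhead : ∏ j ∈ univ.filter p, bern (π (j.1 + 1)) (a j) = A ap :=
    prod_subtype _ (by simp) _
  have hS : ∀ u, (∑ v, if P (e.symm (ap, v)) then A u * B v else 0) =
      A u * ∑ v, if P (e.symm (ap, v)) then B v else 0 := fun u => by
    simp only [mul_sum, mul_ite_zero]
  have hA : ∑ u, A u = 1 := sum_prod_bern _
  rw [hsplit, hsplit, hhead]
  simp only [hagree, hQ, ite_and, sum_ite_irrel, sum_const_zero]
  rw [sum_ite_eq', if_pos (mem_univ _), hS]
  simp only [hS, ← sum_mul, hA, one_mul]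

theorem prb_coord_true_and (k : Fin n) (P : (Fin n → Bool) → Prop)
    (hP : ∀ y y', (∀ j, j ≠ k → y j = y' j) → P y → P y') :
    prb n π (fun y => y k = true ∧ P y) = π (k.1 + 1) * prb n π P := by
  simpa [filter_eq', bern] using prb_agree_on_and π (· = k) (fun _ => true) P hP

theorem prb_agree_below_and_zsum (t : ℕ) (a : Fin n → Bool) (n1 : ℤ) :
    prb n π (fun y => (∀ j : Fin n, j.1 < t → y j = a j) ∧ zsum n y n = n1) =
      (∏ j ∈ univ.filter (fun j : Fin n => j.1 < t), bern (π (j.1 + 1)) (a j)) *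
        bwd n π n1 t (zsum n a t) := by
  rw [bwd, ← prb_agree_on_and π (fun j => j.1 < t) a (fun y => tcnt n y t = n1 - zsum n a t)
    fun y y' h hy => (tcnt_congr (t := t) fun j hj => h j (by omega)) ▸ hy]
  refine prb_congr π fun y => and_congr_right fun hy => ?_
  rw [← zsum_add_tcnt y t, zsum_congr hy]
  omega

theorem prb_coord_true_and_agree_below_and_zsum (t : ℕ) (ht : t < n) (a : Fin n → Bool)
    (n1 : ℤ) :
    prb n π (fun y => y ⟨t, ht⟩ = true ∧ (∀ j : Fin n, j.1 < t → y j = a j) ∧ zsum n y n = n1) =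
      (∏ j ∈ univ.filter (fun j : Fin n => j.1 < t), bern (π (j.1 + 1)) (a j)) *
        (π (t + 1) * bwd n π n1 (t + 1) (zsum n a t + 1)) := by
  set c := n1 - (zsum n a t + 1)
  have hcoord : prb n π (fun y => y ⟨t, ht⟩ = true ∧ tcnt n y (t + 1) = c) =
      π (t + 1) * bwd n π n1 (t + 1) (zsum n a t + 1) :=
    prb_coord_true_and π ⟨t, ht⟩ _ fun y y' h hy =>
      (tcnt_congr (t := t + 1) fun j hj => h j fun hjt => by simp [hjt] at hj) ▸ hy
  rw [← hcoord, ← prb_agree_on_and π (fun j => j.1 < t) a _ fun y y' h ⟨hk, hy⟩ =>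
    ⟨h ⟨t, ht⟩ (lt_irrefl t) ▸ hk, (tcnt_congr (t := t + 1) fun j hj => h j (by omega)) ▸ hy⟩]
  refine prb_congr π fun y => ?_
  rw [and_left_comm]
  refine and_congr_right fun hy => and_congr_right fun hk => ?_
  rw [← zsum_add_tcnt y t, zsum_congr hy, tcnt_eq_add_tcnt_succ y t ht, hk, if_pos rfl]
  omega

end Factorization

/-- Markov property of backward sampling: the conditional law of `Y_i` given the
whole history `Y_1,...,Y_{i-1}` and the constraint depends only on `Z_{i-1}` and
equals `π_i·B_i(Z_{i-1}+1)/B_{i-1}(Z_{i-1})`. -/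
theorem markov_property (n : ℕ) (π : ℕ → ℝ) (n1 : ℤ)
    (i : ℕ) (hi1 : 1 ≤ i) (hi2 : i ≤ n)
    (a : Fin n → Bool)
    (hpos : 0 < prb n π (fun y => (∀ j : Fin n, j.1 < i - 1 → y j = a j) ∧ zsum n y n = n1)) :
    prb n π (fun y => y ⟨i - 1, by omega⟩ = true ∧
          (∀ j : Fin n, j.1 < i - 1 → y j = a j) ∧ zsum n y n = n1) /
        prb n π (fun y => (∀ j : Fin n, j.1 < i - 1 → y j = a j) ∧ zsum n y n = n1)
      = π i * bwd n π n1 i (zsum n a (i - 1) + 1) / bwd n π n1 (i - 1) (zsum n a (i - 1)) := by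
  rw [prb_agree_below_and_zsum] at hpos ⊢
  rw [prb_coord_true_and_agree_below_and_zsum, Nat.sub_add_cancel hi1,
    mul_div_mul_left _ _ (left_ne_zero_of_mul hpos.ne')]
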